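/- In a convex transferable-utility cooperative game, every marginal contribution vector lies in the core. Precisely: let N be a nonempty finite set of players, v : Finset N → ℝ with v(∅) = 0 and supermodular (v(S ∪ T) + v(S ∩ T) ≥ v(S) + v(T) for all S, T ⊆ N), and let the players be enumerated as i₁, …, iₙ (a bijection from Fin n to N, where n = |N|). Define x(i_k) = v({i₁, …, i_k}) − v({i₁, …, i_{k−1}}). Then ∑_{i ∈ N} x i = v(N) and ∑_{i ∈ S} x i ≥ v(S) for every coalition S ⊆ N. -/

import Mathlib

/-!
Transport the game along the enumeration to `Fin n`, where the marginal vector is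
`k ↦ v (Iic k) - v (Iio k)`. Summed over all players it telescopes to `v univ`. For a coalition
`S`, add its members in increasing order: supermodularity says that a player's marginal
contribution grows with the coalition it joins, so its contribution to the part of `S` already
built is at most its contribution to the whole prefix `Iio k`, which is its payoff.
-/

open Finset

def Supermodular {α β : Type*} [DecidableEq α] [Add β] [LE β] (v : Finset α → β) : Prop :=
  ∀ S T : Finset α, v S + v T ≤ v (S ∪ T) + v (S ∩ T)

theorem Supermodular.comp_image {α γ β : Type*} [DecidableEq α] [DecidableEq γ]
    [Add β] [LE β] {v : Finset γ → β} (hv : Supermodular v) {f : α → γ}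
    (hf : Function.Injective f) :
    Supermodular (fun S => v (S.image f)) := fun S T => by
  simpa only [image_union, image_inter _ _ hf] using hv (S.image f) (T.image f)

theorem Supermodular.marginal_mono {α β : Type*} [DecidableEq α]
    [AddCommGroup β] [PartialOrder β] [IsOrderedAddMonoid β] {v : Finset α → β}
    (hv : Supermodular v) {A B : Finset α} (hAB : A ⊆ B) {a : α} (ha : a ∉ B) :
    v (insert a A) - v A ≤ v (insert a B) - v B := by
  have hunion : insert a A ∪ B = insert a B := by
    rw [insert_union, union_eq_right.2 hAB]
  have hinter : insert a A ∩ B = A := by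
    rw [insert_inter_of_notMem ha, inter_eq_left.2 hAB]
  have := hv (insert a A) B
  rw [hunion, hinter] at this
  rw [sub_le_sub_iff]
  simpa only [add_comm] using this

section

variable {α β : Type*} [LinearOrder α] [LocallyFiniteOrderBot α] [AddCommGroup β]

def marginalVector (v : Finset α → β) (a : α) : β :=
  v (Iic a) - v (Iio a)

theorem sum_marginalVector_of_isLowerSet (v : Finset α → β) (h0 : v ∅ = 0) {s : Finset α}
    (hs : IsLowerSet (s : Set α)) : ∑ a ∈ s, marginalVector v a = v s := by
  induction s using induction_on_max with
  | empty => simp [h0]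
  | insert a s hlt ih =>
    have hIio : s = Iio a := by
      ext b
      refine ⟨fun hb => mem_Iio.2 (hlt b hb), fun hb => ?_⟩
      have := hs (le_of_lt (mem_Iio.1 hb)) (mem_insert_self a s)
      exact (mem_insert.1 this).resolve_left (ne_of_lt (mem_Iio.1 hb))
    subst hIio
    rw [sum_insert notMem_Iio_self, ih (by rw [coe_Iio]; exact isLowerSet_Iio a), Iio_insert,
      marginalVector]
    abel

theorem sum_marginalVector [Fintype α] (v : Finset α → β) (h0 : v ∅ = 0) :
    ∑ a, marginalVector v a = v univ :=
  sum_marginalVector_of_isLowerSet v h0 (by rw [coe_univ]; exact isLowerSet_univ)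

theorem Supermodular.le_sum_marginalVector [PartialOrder β] [IsOrderedAddMonoid β]
    {v : Finset α → β} (hv : Supermodular v) (h0 : v ∅ = 0) (S : Finset α) :
    v S ≤ ∑ a ∈ S, marginalVector v a := by
  induction S using induction_on_max with
  | empty => simp [h0]
  | insert a S hlt ih =>
    have hS : S ⊆ Iio a := fun b hb => mem_Iio.2 (hlt b hb)
    have haS : a ∉ S := fun ha => lt_irrefl a (hlt a ha)
    have hstep := hv.marginal_mono hS notMem_Iio_self
    rw [Iio_insert] at hstep
    rw [sum_insert haS]
    calc v (insert a S) = v S + (v (insert a S) - v S) := by abel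
      _ ≤ ∑ b ∈ S, marginalVector v b + marginalVector v a := add_le_add ih hstep
      _ = _ := add_comm _ _

end

theorem marginal_vector_mem_core_general {N : Type*} [Fintype N] [DecidableEq N]
    (v : Finset N → ℝ) (h0 : v ∅ = 0)
    (hconvex : ∀ S T : Finset N, v S + v T ≤ v (S ∪ T) + v (S ∩ T))
    (e : Fin (Fintype.card N) ≃ N) (x : N → ℝ)
    (hx : ∀ i : N,
      x i = v ((Finset.univ.filter (fun j : Fin (Fintype.card N) => j ≤ e.symm i)).image e)
          - v ((Finset.univ.filter (fun j : Fin (Fintype.card N) => j < e.symm i)).image e)) :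
    (∑ i, x i = v Finset.univ) ∧ ∀ S : Finset N, v S ≤ ∑ i ∈ S, x i := by
  set w : Finset (Fin (Fintype.card N)) → ℝ := fun T => v (T.image e)
  have hw : Supermodular w := Supermodular.comp_image hconvex e.injective
  have hw0 : w ∅ = 0 := by simp [w, h0]
  have hxe : ∀ k, x (e k) = marginalVector w k := fun k => by
    rw [hx, e.symm_apply_apply, filter_ge_eq_Iic, filter_gt_eq_Iio]
    rfl
  have hsum : ∀ S : Finset N, ∑ i ∈ S, x i = ∑ k ∈ S.image e.symm, marginalVector w k :=
      fun S => by
    rw [sum_image (fun _ _ _ _ h => e.symm.injective h)]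
    exact sum_congr rfl fun i _ => by rw [← hxe, e.apply_symm_apply]
  refine ⟨?_, fun S => ?_⟩
  · rw [hsum, image_univ_equiv, sum_marginalVector w hw0]
    exact congrArg v (image_univ_equiv e)
  · have hwS : w (S.image e.symm) = v S := by
      simp only [w, image_image, e.self_comp_symm, image_id]
    rw [hsum, ← hwS]
    exact hw.le_sum_marginalVector hw0 _

/-- In a convex TU game, every marginal contribution vector (with respect to an
enumeration of the players) lies in the core. -/
theorem marginal_vector_mem_core {N : Type*} [Fintype N] [DecidableEq N] [Nonempty N]
    (v : Finset N → ℝ) (h0 : v ∅ = 0)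
    (hconvex : ∀ S T : Finset N, v S + v T ≤ v (S ∪ T) + v (S ∩ T))
    (e : Fin (Fintype.card N) ≃ N) (x : N → ℝ)
    (hx : ∀ i : N,
      x i = v ((Finset.univ.filter (fun j : Fin (Fintype.card N) => j ≤ e.symm i)).image e)
          - v ((Finset.univ.filter (fun j : Fin (Fintype.card N) => j < e.symm i)).image e)) :
    (∑ i, x i = v Finset.univ) ∧ ∀ S : Finset N, v S ≤ ∑ i ∈ S, x i :=
  marginal_vector_mem_core_general v h0 hconvex e x hx
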